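/- Let M be a matroid on a finite ground set E, let C be a cocircuit of M, and let v ∈ C. Let T be any set of cocircuits of M satisfying {C' : C' a cocircuit of M with v ∉ C'} ⊆ T ⊆ {cocircuits of M} \ {C}. Then the ideal generated by {x_{C'} : C' ∈ T} satisfies (x_{C'} : C' ∈ T) : x_C = J(M ⧸ {v}) : x_C. -/

import Mathlib

/-!
Write `I = (x_{C'} : C' ∈ T)` and `J = J(M ⧸ {v})`. Being an intersection of the monomial
primes `p_F`, `J` is radical, and it is generated by the `x_D` with `D` a cocircuit of `M`
avoiding `v`; so `J ⊆ I`. Conversely, each `C' ∈ T` differs from `C`, so cocircuit elimination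
puts a cocircuit of `M` avoiding `v` inside `C ∪ C'`; hence `x_C x_{C'} ∈ J`, i.e.
`I ⊆ J : x_C`. If now `f x_C ∈ I`, then `(f x_C)² = f · x_C (f x_C) ∈ J`, and `f x_C ∈ J`.
-/

open Matroid MvPolynomial

/-- The squarefree monomial `x_S = ∏_{i ∈ S} x_i`. -/
noncomputable def xS {α : Type*} [Fintype α] (K : Type*) [Field K] (S : Set α) :
    MvPolynomial α K :=
  ∏ i ∈ S.toFinite.toFinset, MvPolynomial.X i

/-- The monomial `x^γ = ∏ i, x_i ^ γ(i)`. -/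
noncomputable def xPow {α : Type*} [Fintype α] (K : Type*) [Field K] (γ : α → ℕ) :
    MvPolynomial α K :=
  ∏ i : α, (MvPolynomial.X i : MvPolynomial α K) ^ γ i

/-- `p_S`: the ideal of `K[x_i : i ∈ α]` generated by the variables `x_i`, `i ∈ S`. -/
noncomputable def pS {α : Type*} (K : Type*) [Field K] (S : Set α) :
    Ideal (MvPolynomial α K) :=
  Ideal.span (MvPolynomial.X '' S)

/-- The cover ideal `J(M) = ⋂_{F basis of M} p_F` of a matroid `M`. -/
noncomputable def coverIdeal {α : Type*} [Fintype α] (K : Type*) [Field K] (M : Matroid α) :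
    Ideal (MvPolynomial α K) :=
  ⨅ F ∈ {F : Set α | M.IsBase F}, pS K F

/-- The `ℓ`-th symbolic power `J(M)^{(ℓ)} = ⋂_{F basis of M} p_F^ℓ` of the cover ideal. -/
noncomputable def symbPow {α : Type*} [Fintype α] (K : Type*) [Field K] (M : Matroid α)
    (ℓ : ℕ) : Ideal (MvPolynomial α K) :=
  ⨅ F ∈ {F : Set α | M.IsBase F}, (pS K F) ^ ℓ

/-- `SF_ℓ(J(M))`: the ideal generated by the squarefree monomials of `J(M)^{(ℓ)}`, i.e. by the
monomials `x_S` with `|S ∩ F| ≥ ℓ` for every basis `F` of `M`. -/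
noncomputable def SF {α : Type*} [Fintype α] (K : Type*) [Field K] (M : Matroid α)
    (ℓ : ℕ) : Ideal (MvPolynomial α K) :=
  Ideal.span {m : MvPolynomial α K |
    ∃ S : Set α, m = xS K S ∧ ∀ F : Set α, M.IsBase F → ℓ ≤ (S ∩ F).ncard}

/-- Matroid deletion: `M ⧹ D` is the restriction of `M` to `M.E \ D`. -/
def mdel {α : Type*} (M : Matroid α) (D : Set α) : Matroid α := M ↾ (M.E \ D)

/-- Matroid contraction: `M ⧸ C = (M✶ ⧹ C)✶`. -/
def mcon {α : Type*} (M : Matroid α) (C : Set α) : Matroid α := (mdel M✶ C)✶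

/-- A cocircuit of `M`: a minimal subset of the ground set meeting every basis of `M`. -/
def IsCocircuit' {α : Type*} (M : Matroid α) (C : Set α) : Prop :=
  C ⊆ M.E ∧ (∀ F, M.IsBase F → (C ∩ F).Nonempty) ∧
    ∀ C' : Set α, C' ⊂ C → ∃ F, M.IsBase F ∧ C' ∩ F = ∅

theorem Ideal.colon_span_singleton_eq_of_isRadical {R : Type*} [CommRing R] {I J : Ideal R}
    {a : R} (hJ : J.IsRadical) (hJI : J ≤ I) (hIJ : I ≤ J.colon (Ideal.span {a})) :
    I.colon (Ideal.span {a}) = J.colon (Ideal.span {a}) := by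
  refine le_antisymm (fun f hf => ?_) (Submodule.colon_mono hJI le_rfl)
  rw [Ideal.mem_colon_span_singleton] at hf ⊢
  have hfaa : f * a * a ∈ J := Ideal.mem_colon_span_singleton.1 (hIJ hf)
  have hsq : (f * a) ^ 2 = f * (f * a * a) := by ring
  exact hJ ⟨2, hsq ▸ J.mul_mem_left f hfaa⟩

namespace Matroid

variable {α : Type*} {M : Matroid α}

lemma IsCocircuit.inter_isBase_nonempty {D B : Set α} (hD : M.IsCocircuit D) (hB : M.IsBase B) :
    (D ∩ B).Nonempty :=
  (isCocircuit_iff_minimal.1 hD).prop B hB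

lemma isCocircuit'_iff {D : Set α} : IsCocircuit' M D ↔ M.IsCocircuit D := by
  refine ⟨fun ⟨_, hmeet, hmin⟩ => isCocircuit_iff_minimal.2 ⟨hmeet, fun X hX hXD => ?_⟩,
    fun hD => ⟨hD.subset_ground, fun B hB => hD.inter_isBase_nonempty hB, fun X hXD => ?_⟩⟩
  · by_contra hDX
    obtain ⟨B, hB, hXB⟩ := hmin X (ssubset_of_subset_not_subset hXD hDX)
    exact (hX B hB).ne_empty hXB
  · by_contra! hX
    exact hXD.not_subset ((isCocircuit_iff_minimal.1 hD).2 hX hXD.subset)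

lemma exists_isCocircuit_subset_of_forall_isBase {X : Set α}
    (hX : ∀ B, M.IsBase B → (X ∩ B).Nonempty) : ∃ D ⊆ X, M.IsCocircuit D := by
  have hdep : M✶.Dep (X ∩ M.E) := dual_dep_iff_forall.2
    ⟨fun B hB => by rw [Set.inter_assoc, Set.inter_eq_right.2 hB.subset_ground]; exact hX B hB,
      Set.inter_subset_right⟩
  obtain ⟨D, hDX, hD⟩ := hdep.exists_isCircuit_subset
  exact ⟨D, hDX.trans Set.inter_subset_left, hD⟩

lemma IsCocircuit.exists_contractElem_isCocircuit_subset_union {D₁ D₂ : Set α}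
    (h₁ : M.IsCocircuit D₁) (h₂ : M.IsCocircuit D₂) (hne : D₁ ≠ D₂) (v : α) :
    ∃ D ⊆ D₁ ∪ D₂, (M ／ {v}).IsCocircuit D := by
  obtain ⟨D, hD, hDc⟩ := h₁.isCircuit.elimination h₂.isCircuit hne v
  exact ⟨D, hD.trans Set.sdiff_subset,
    contract_isCocircuit_iff.2 ⟨hDc, Set.disjoint_singleton_right.2 fun h => (hD h).2 rfl⟩⟩

end Matroid

section CoverIdeal

variable {α : Type*} {K : Type*} [Field K]

lemma X_mem_pS_iff {F : Set α} {i : α} : (X i : MvPolynomial α K) ∈ pS K F ↔ i ∈ F := by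
  simp [pS, mem_ideal_span_X_image, support_X, Finsupp.single_apply_eq_zero]

/-- `p_F` is the kernel of the substitution `x_i ↦ 0` for `i ∈ F`. -/
lemma isPrime_pS (F : Set α) : (pS K F).IsPrime := by
  classical
  let φ : MvPolynomial α K →ₐ[K] MvPolynomial α K := aeval fun i => if i ∈ F then 0 else X i
  have hsub : ∀ g, g - φ g ∈ pS K F := by
    intro g
    induction g using MvPolynomial.induction_on with
    | C a => simp [φ]
    | add p q hp hq => simpa [map_add, add_sub_add_comm] using add_mem hp hq
    | mul_X p i hp =>
      have hi : X i - φ (X i) ∈ pS K F := by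
        by_cases hiF : i ∈ F
        · simpa [φ, hiF] using X_mem_pS_iff.2 hiF
        · simp [φ, hiF]
      have := add_mem ((pS K F).mul_mem_right (X i) hp) ((pS K F).mul_mem_left (φ p) hi)
      rw [map_mul]
      convert this using 1
      ring
  have hker : pS K F = RingHom.ker φ := by
    refine le_antisymm (Ideal.span_le.2 ?_) fun g hg => ?_
    · rintro _ ⟨i, hi, rfl⟩
      simp [φ, hi]
    · simpa [(RingHom.mem_ker).1 hg] using hsub g
  rw [hker]
  exact RingHom.ker_isPrime _

variable [Fintype α]

lemma xS_mem_pS_iff {S F : Set α} : xS K S ∈ pS K F ↔ (S ∩ F).Nonempty := by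
  rw [xS, (isPrime_pS F).prod_mem_iff]
  simp [X_mem_pS_iff, Set.Nonempty]

lemma xS_dvd_monomial {S : Set α} {d : α →₀ ℕ} (hS : S ⊆ d.support) (c : K) :
    xS K S ∣ monomial d c := by
  rw [monomial_eq, Finsupp.prod]
  refine Dvd.dvd.mul_left ?_ _
  calc xS K S ∣ ∏ i ∈ d.support, X i :=
        Finset.prod_dvd_prod_of_subset _ _ _ (by simpa using hS)
    _ ∣ ∏ i ∈ d.support, X i ^ d i :=
        Finset.prod_dvd_prod_of_dvd _ _ fun i hi => dvd_pow_self _ (Finsupp.mem_support_iff.1 hi)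

lemma mem_span_xS_of_forall_support {P : Set α → Prop} {g : MvPolynomial α K}
    (h : ∀ d ∈ g.support, ∃ S ⊆ (d.support : Set α), P S) :
    g ∈ Ideal.span {m | ∃ S, P S ∧ m = xS K S} := by
  rw [← support_sum_monomial_coeff g]
  refine Ideal.sum_mem _ fun d hd => ?_
  obtain ⟨S, hSd, hS⟩ := h d hd
  exact Ideal.mem_of_dvd _ (xS_dvd_monomial hSd _) (Ideal.subset_span ⟨S, hS, rfl⟩)

lemma mem_coverIdeal_iff {M : Matroid α} {g : MvPolynomial α K} :
    g ∈ coverIdeal K M ↔ ∀ F, M.IsBase F → g ∈ pS K F := by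
  simp [coverIdeal]

lemma coverIdeal_isRadical (M : Matroid α) : (coverIdeal K M).IsRadical :=
  Ideal.isRadical_iInf _ fun F => Ideal.isRadical_iInf _ fun _ => (isPrime_pS F).isRadical

lemma coverIdeal_eq_span_xS_isCocircuit (M : Matroid α) :
    coverIdeal K M = Ideal.span {m | ∃ D, M.IsCocircuit D ∧ m = xS K D} := by
  refine le_antisymm (fun g hg => mem_span_xS_of_forall_support fun d hd => ?_)
    (Ideal.span_le.2 ?_)
  · refine M.exists_isCocircuit_subset_of_forall_isBase fun F hF => ?_
    obtain ⟨i, hiF, hdi⟩ := mem_ideal_span_X_image.1 (mem_coverIdeal_iff.1 hg F hF) d hd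
    exact ⟨i, Finsupp.mem_support_iff.2 hdi, hiF⟩
  · rintro _ ⟨D, hD, rfl⟩
    exact mem_coverIdeal_iff.2 fun F hF => xS_mem_pS_iff.2 (hD.inter_isBase_nonempty hF)

lemma xS_mul_xS_mem_coverIdeal {M : Matroid α} {S₁ S₂ : Set α}
    (h : ∃ D ⊆ S₁ ∪ S₂, M.IsCocircuit D) : xS K S₁ * xS K S₂ ∈ coverIdeal K M := by
  obtain ⟨D, hDS, hD⟩ := h
  refine mem_coverIdeal_iff.2 fun F hF => ?_
  obtain ⟨i, hiD, hiF⟩ := hD.inter_isBase_nonempty hF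
  rcases hDS hiD with hi | hi
  · exact Ideal.mul_mem_right _ _ (xS_mem_pS_iff.2 ⟨i, hi, hiF⟩)
  · exact Ideal.mul_mem_left _ _ (xS_mem_pS_iff.2 ⟨i, hi, hiF⟩)

end CoverIdeal

theorem stmt17_general {α : Type*} [Fintype α] (K : Type*) [Field K]
    (M : Matroid α)
    (C : Set α) (hC : IsCocircuit' M C) (v : α)
    (T : Set (Set α))
    (hT1 : {C' : Set α | IsCocircuit' M C' ∧ v ∉ C'} ⊆ T)
    (hT2 : T ⊆ {C' : Set α | IsCocircuit' M C'} \ {C}) :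
    Submodule.colon (Ideal.span {m : MvPolynomial α K | ∃ C' ∈ T, m = xS K C'})
        (Ideal.span {xS K C}) =
      Submodule.colon (coverIdeal K (mcon M {v})) (Ideal.span {xS K C}) := by
  have hcontract : mcon M {v} = M ／ {v} := rfl
  refine Ideal.colon_span_singleton_eq_of_isRadical (coverIdeal_isRadical _) ?_ ?_
  · rw [coverIdeal_eq_span_xS_isCocircuit, hcontract]
    refine Ideal.span_mono ?_
    rintro _ ⟨D, hD, rfl⟩
    rw [contract_isCocircuit_iff, Set.disjoint_singleton_right] at hD
    exact ⟨D, hT1 ⟨isCocircuit'_iff.2 hD.1, hD.2⟩, rfl⟩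
  · refine Ideal.span_le.2 ?_
    rintro _ ⟨C', hC'T, rfl⟩
    obtain ⟨hC', hC'C⟩ := hT2 hC'T
    exact Ideal.mem_colon_span_singleton.2 <| xS_mul_xS_mem_coverIdeal <|
      (isCocircuit'_iff.1 hC').exists_contractElem_isCocircuit_subset_union
        (isCocircuit'_iff.1 hC) hC'C v

/-- let `C` be a cocircuit of `M`, `v ∈ C`, and `T` any set of cocircuits of `M`
with `{C' cocircuit : v ∉ C'} ⊆ T ⊆ {cocircuits} \ {C}`. Then
`(x_{C'} : C' ∈ T) : x_C = J(M ⧸ {v}) : x_C`. -/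
theorem stmt17 {α : Type*} [Fintype α] (K : Type*) [Field K]
    (M : Matroid α) (hE : M.E = Set.univ)
    (C : Set α) (hC : IsCocircuit' M C) (v : α) (hv : v ∈ C)
    (T : Set (Set α))
    (hT1 : {C' : Set α | IsCocircuit' M C' ∧ v ∉ C'} ⊆ T)
    (hT2 : T ⊆ {C' : Set α | IsCocircuit' M C'} \ {C}) :
    Submodule.colon (Ideal.span {m : MvPolynomial α K | ∃ C' ∈ T, m = xS K C'})
        (Ideal.span {xS K C}) =
      Submodule.colon (coverIdeal K (mcon M {v})) (Ideal.span {xS K C}) :=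
  stmt17_general K M C hC v T hT1 hT2
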